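/- Let S be a polynomial ring over a field k and I ⊆ S a semigroup (toric) ideal containing no linear form. Suppose y_{12}x_3 − y_{13}x_2 + y_{23}x_1 ∈ I, where x_1, x_2, x_3 are distinct variables of S and y_{12}, y_{13}, y_{23} are (possibly zero) variables of S distinct from x_1, x_2, x_3. Then at least one of y_{12}, y_{13}, y_{23} is zero. -/

import Mathlib

/-!
STATEMENT 17: If `I` is a semigroup (toric) ideal of a polynomial ring containing no
linear form, and `y₁₂ x₃ − y₁₃ x₂ + y₂₃ x₁ ∈ I` where `x₁, x₂, x₃` are distinct
variables and each `y_{ij}` is either zero or a variable distinct from `x₁, x₂, x₃`,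
then at least one of `y₁₂, y₁₃, y₂₃` is zero.
-/

open MvPolynomial

/-- A (semigroup, toric) ideal: the kernel of a `k`-algebra homomorphism from the
polynomial ring to a Laurent polynomial ring sending each variable to a monomial. -/
def IsToricIdeal {k : Type*} [Field k] {σ : Type*} (I : Ideal (MvPolynomial σ k)) : Prop :=
  ∃ (p : ℕ) (m : σ → (Fin p →₀ ℤ)),
    I = RingHom.ker (MvPolynomial.aeval
      (fun i => (AddMonoidAlgebra.single (m i) 1 : AddMonoidAlgebra k (Fin p →₀ ℤ)))).toRingHom

/-!
The augmentation `k[G] → k`, `single g r ↦ r`, composed with a monomial map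
`X i ↦ single (m i) 1` is evaluation at the all-ones point. Hence every polynomial in a
toric ideal has coefficient sum zero, whereas `X u * X c - X v * X b + X w * X a` has
coefficient sum `1 - 1 + 1 = 1`.
-/

theorem eval_one_eq_zero_of_aeval_single_eq_zero {k σ G : Type*} [CommSemiring k]
    [AddCommMonoid G] (m : σ → G) {f : MvPolynomial σ k}
    (hf : aeval (fun i => (AddMonoidAlgebra.single (m i) 1 : AddMonoidAlgebra k G)) f = 0) :
    eval 1 f = 0 := by
  have h := congrArg (AddMonoidAlgebra.lift k k G 1) hf
  rw [← AlgHom.comp_apply, comp_aeval, map_zero] at h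
  simpa [AddMonoidAlgebra.lift_single, coe_aeval_eq_eval, Pi.one_def] using h

theorem IsToricIdeal.eval_one_eq_zero {k σ : Type*} [Field k] {I : Ideal (MvPolynomial σ k)}
    (hI : IsToricIdeal I) {f : MvPolynomial σ k} (hf : f ∈ I) : eval 1 f = 0 := by
  obtain ⟨p, m, rfl⟩ := hI
  exact eval_one_eq_zero_of_aeval_single_eq_zero m hf

theorem toric_pfaffian_relation_forces_zero_general {k : Type*} [Field k] {σ : Type*}
    (I : Ideal (MvPolynomial σ k)) (htoric : IsToricIdeal I)
    (a b c : σ)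
    (y12 y13 y23 : MvPolynomial σ k)
    (h12 : y12 = 0 ∨ ∃ u : σ, u ≠ a ∧ u ≠ b ∧ u ≠ c ∧ y12 = X u)
    (h13 : y13 = 0 ∨ ∃ u : σ, u ≠ a ∧ u ≠ b ∧ u ≠ c ∧ y13 = X u)
    (h23 : y23 = 0 ∨ ∃ u : σ, u ≠ a ∧ u ≠ b ∧ u ≠ c ∧ y23 = X u)
    (hmem : y12 * X c - y13 * X b + y23 * X a ∈ I) :
    y12 = 0 ∨ y13 = 0 ∨ y23 = 0 := by
  by_contra! hne
  obtain ⟨u, -, -, -, rfl⟩ := h12.resolve_left hne.1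
  obtain ⟨v, -, -, -, rfl⟩ := h13.resolve_left hne.2.1
  obtain ⟨w, -, -, -, rfl⟩ := h23.resolve_left hne.2.2
  have h := htoric.eval_one_eq_zero hmem
  simp at h

theorem toric_pfaffian_relation_forces_zero {k : Type*} [Field k] {σ : Type*}
    (I : Ideal (MvPolynomial σ k)) (htoric : IsToricIdeal I)
    (hnolin : ∀ f ∈ I, f.IsHomogeneous 1 → f = 0)
    (a b c : σ) (hab : a ≠ b) (hac : a ≠ c) (hbc : b ≠ c)
    (y12 y13 y23 : MvPolynomial σ k)
    (h12 : y12 = 0 ∨ ∃ u : σ, u ≠ a ∧ u ≠ b ∧ u ≠ c ∧ y12 = X u)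
    (h13 : y13 = 0 ∨ ∃ u : σ, u ≠ a ∧ u ≠ b ∧ u ≠ c ∧ y13 = X u)
    (h23 : y23 = 0 ∨ ∃ u : σ, u ≠ a ∧ u ≠ b ∧ u ≠ c ∧ y23 = X u)
    (hmem : y12 * X c - y13 * X b + y23 * X a ∈ I) :
    y12 = 0 ∨ y13 = 0 ∨ y23 = 0 :=
  toric_pfaffian_relation_forces_zero_general I htoric a b c y12 y13 y23 h12 h13 h23 hmem
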